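/- Let v₁, v₂, v₃, v₄, w be five distinct monomials of A whose F-span is a Kummer space, satisfying v₁v₂ = i·v₂v₁, v₂v₄ = i·v₄v₂, v₄v₃ = i·v₃v₄, v₃v₁ = i·v₁v₃, v₁v₄ = −v₄v₁, and v₂v₃ = −v₃v₂. Then either w·v_k = i·v_k·w for all k ∈ {1, 2, 3, 4}, or v_k·w = i·w·v_k for all k ∈ {1, 2, 3, 4}. -/
import Mathlib
set_option linter.unusedSectionVars false
set_option maxHeartbeats 2000000

section Basics
variable {F A : Type*} [Field F] [CharZero F] [DivisionRing A] [Algebra F A]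
variable {i : F}

lemma i_sq (hi : i ^ 2 = -1) : i * i = -1 := by rw [← sq]; exact hi

lemma i_four (hi : i ^ 2 = -1) : i ^ 4 = 1 := by
  have : i ^ 4 = (i ^ 2) ^ 2 := by ring
  rw [this, hi]; ring

lemma i_ne_zero (hi : i ^ 2 = -1) : i ≠ 0 := by
  intro h; rw [h] at hi; simp at hi

lemma ipow_mod (hi : i ^ 2 = -1) (m : ℕ) : i ^ m = i ^ (m % 4) := by
  conv_lhs => rw [← Nat.div_add_mod m 4]
  rw [pow_add, pow_mul, i_four hi, one_pow, one_mul]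

lemma ipow_eq_one_small (hi : i ^ 2 = -1) (e : ℕ) (he : e < 4) (h : i ^ e = 1) : e = 0 := by
  interval_cases e
  · rfl
  · exfalso; rw [pow_one] at h; rw [h] at hi; norm_num at hi
  · exfalso; rw [hi] at h; norm_num at h
  · exfalso
    have h4 := i_four hi
    have : i ^ 4 = i ^ 3 * i := by ring
    rw [this, h, one_mul] at h4
    rw [h4] at hi; norm_num at hi

lemma ipow_eq_one (hi : i ^ 2 = -1) (e : ℕ) (h : i ^ e = 1) : e % 4 = 0 := by
  rw [ipow_mod hi] at h
  exact ipow_eq_one_small hi _ (Nat.mod_lt _ (by norm_num)) h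

lemma ipow_inj (hi : i ^ 2 = -1) (a b : ℕ) (h : i ^ a = i ^ b) : a % 4 = b % 4 := by
  have hb : i ^ (b % 4) * i ^ (4 - b % 4) = 1 := by
    rw [← pow_add, Nat.add_sub_cancel' (le_of_lt (Nat.mod_lt _ (by norm_num)))]
    exact i_four hi
  rw [ipow_mod hi a, ipow_mod hi b] at h
  have key : i ^ (a % 4 + (4 - b % 4)) = 1 := by rw [pow_add, h, hb]
  have h0 := ipow_eq_one hi _ key
  have ha4 : a % 4 < 4 := Nat.mod_lt _ (by norm_num)
  have hb4 : b % 4 < 4 := Nat.mod_lt _ (by norm_num)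
  omega

lemma smul_cancel {α β : F} {m : A} (hm : m ≠ 0) (h : α • m = β • m) : α = β := by
  by_contra hne
  have h2 : (α - β) • m = 0 := by rw [sub_smul, h, sub_self]
  have h3 : m = 0 := by
    have := congrArg (fun x => (α - β)⁻¹ • x) h2
    simpa [smul_smul, inv_mul_cancel₀ (sub_ne_zero.mpr hne)] using this
  exact hm h3

-- flips
lemma flip_pow (hi : i ^ 2 = -1) {a b : A} {m : ℕ} (hm : m ≤ 4)
    (h : a * b = i ^ m • (b * a)) : b * a = i ^ (4 - m) • (a * b) := by
  rw [h, smul_smul, ← pow_add, Nat.sub_add_cancel hm, i_four hi, one_smul]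

lemma neg_to_i2 (hi : i ^ 2 = -1) {a b : A} (h : a * b = -(b * a)) :
    a * b = i ^ 2 • (b * a) := by rw [hi, h, neg_smul, one_smul]

-- moving an element through a product
lemma qc_mul {t a b : A} {γ δ : F} (h1 : t * a = γ • (a * t)) (h2 : t * b = δ • (b * t)) :
    t * (a * b) = (γ * δ) • (a * b * t) := by
  rw [← mul_assoc, h1, smul_mul_assoc, mul_assoc, h2, mul_smul_comm, smul_smul, mul_assoc]

end Basics

section QC
variable {F A : Type*} [Field F] [CharZero F] [DivisionRing A] [Algebra F A]
variable {i : F}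

def qc (i : F) (u v : A) : Prop := ∃ m : ℕ, u * v = i ^ m • (v * u)

lemma qc_of_commute {u v : A} (h : Commute u v) : qc i u v :=
  ⟨0, by simpa using h.eq⟩

lemma qc.mul_right {u v v' : A} (h₁ : qc i u v) (h₂ : qc i u v') : qc i u (v * v') := by
  obtain ⟨m, hm⟩ := h₁; obtain ⟨m', hm'⟩ := h₂
  refine ⟨m + m', ?_⟩
  rw [← mul_assoc, hm, smul_mul_assoc, mul_assoc, hm', mul_smul_comm, smul_smul, ← pow_add,
    ← mul_assoc]

lemma qc.mul_left {u u' v : A} (h₁ : qc i u v) (h₂ : qc i u' v) : qc i (u * u') v := by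
  obtain ⟨m, hm⟩ := h₁; obtain ⟨m', hm'⟩ := h₂
  refine ⟨m' + m, ?_⟩
  rw [mul_assoc, hm', mul_smul_comm, ← mul_assoc, hm, smul_mul_assoc, smul_smul, ← pow_add,
    mul_assoc]

lemma qc_one_right {u : A} : qc i u 1 := qc_of_commute (Commute.one_right u)

lemma qc_one_left {v : A} : qc i (1 : A) v := qc_of_commute (Commute.one_left v)

lemma qc.pow_right {u v : A} (h : qc i u v) (m : ℕ) : qc i u (v ^ m) := by
  induction m with
  | zero => simpa using (qc_one_right : qc i u 1)
  | succ k ih => rw [pow_succ]; exact ih.mul_right h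

lemma qc.pow_left {u v : A} (h : qc i u v) (m : ℕ) : qc i (u ^ m) v := by
  induction m with
  | zero => simpa using (qc_one_left : qc i (1:A) v)
  | succ k ih => rw [pow_succ]; exact ih.mul_left h

lemma qc_list_right {u : A} {L : List A} (h : ∀ x ∈ L, qc i u x) : qc i u L.prod := by
  induction L with
  | nil => simpa using (qc_one_right : qc i u 1)
  | cons a L ih =>
    rw [List.prod_cons]
    exact (h a (by simp)).mul_right (ih fun x hx => h x (by simp [hx]))

lemma qc_list_left {v : A} {L : List A} (h : ∀ x ∈ L, qc i x v) : qc i L.prod v := by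
  induction L with
  | nil => simpa using (qc_one_left : qc i (1:A) v)
  | cons a L ih =>
    rw [List.prod_cons]
    exact (h a (by simp)).mul_left (ih fun x hx => h x (by simp [hx]))

end QC

structure TensorCyclicPres (F A : Type*) [Field F] [Ring A] [Algebra F A]
    (i : F) (n : ℕ) where
  x : Fin n → A
  y : Fin n → A
  α : Fin n → F
  β : Fin n → F
  α_ne_zero : ∀ k, α k ≠ 0
  β_ne_zero : ∀ k, β k ≠ 0
  x_pow : ∀ k, x k ^ 4 = algebraMap F A (α k)
  y_pow : ∀ k, y k ^ 4 = algebraMap F A (β k)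
  xy_rel : ∀ k, x k * y k = i • (y k * x k)
  xx_comm : ∀ k l, k ≠ l → Commute (x k) (x l)
  yy_comm : ∀ k l, k ≠ l → Commute (y k) (y l)
  xy_comm : ∀ k l, k ≠ l → Commute (x k) (y l)
  generates : Algebra.adjoin F (Set.range x ∪ Set.range y) = ⊤

/-- A monomial with respect to the presentation: an element of the form
`∏ₖ (x k)^{aₖ} (y k)^{bₖ}` with `0 ≤ aₖ, bₖ ≤ 3`. -/
def TensorCyclicPres.IsMonomial {F A : Type*} [Field F] [Ring A] [Algebra F A]
    {i : F} {n : ℕ} (P : TensorCyclicPres F A i n) (v : A) : Prop :=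
  ∃ a b : Fin n → Fin 4,
    v = ((List.finRange n).map (fun k => P.x k ^ (a k : ℕ) * P.y k ^ (b k : ℕ))).prod


section Mono
variable {F A : Type*} [Field F] [CharZero F] [DivisionRing A] [Algebra F A]
variable {i : F} {n : ℕ}

lemma x_ne_zero (P : TensorCyclicPres F A i n) (k : Fin n) : P.x k ≠ 0 := by
  intro h
  have h4 := P.x_pow k
  rw [h, zero_pow (by norm_num)] at h4
  exact P.α_ne_zero k ((algebraMap F A).injective (by rw [← h4, map_zero])).symm

lemma y_ne_zero (P : TensorCyclicPres F A i n) (k : Fin n) : P.y k ≠ 0 := by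
  intro h
  have h4 := P.y_pow k
  rw [h, zero_pow (by norm_num)] at h4
  exact P.β_ne_zero k ((algebraMap F A).injective (by rw [← h4, map_zero])).symm

lemma mono_ne_zero (P : TensorCyclicPres F A i n) {v : A} (hv : P.IsMonomial v) : v ≠ 0 := by
  obtain ⟨a, b, hab⟩ := hv
  rw [hab]
  apply List.prod_ne_zero
  intro hx
  simp only [List.mem_map] at hx
  obtain ⟨k, -, hk⟩ := hx
  exact mul_ne_zero (pow_ne_zero _ (x_ne_zero P k)) (pow_ne_zero _ (y_ne_zero P k)) hk

lemma qc_xy (P : TensorCyclicPres F A i n) (k l : Fin n) : qc i (P.x k) (P.y l) := by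
  by_cases h : k = l
  · subst h; exact ⟨1, by rw [pow_one]; exact P.xy_rel k⟩
  · exact qc_of_commute (P.xy_comm k l h)

lemma qc_yx (hi : i ^ 2 = -1) (P : TensorCyclicPres F A i n) (k l : Fin n) :
    qc i (P.y k) (P.x l) := by
  by_cases h : k = l
  · subst h
    have h1 : P.x k * P.y k = i ^ 1 • (P.y k * P.x k) := by rw [pow_one]; exact P.xy_rel k
    exact ⟨3, by simpa using flip_pow hi (by norm_num) h1⟩
  · exact qc_of_commute (P.xy_comm l k (Ne.symm h)).symm

lemma qc_xx (P : TensorCyclicPres F A i n) (k l : Fin n) : qc i (P.x k) (P.x l) := by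
  by_cases h : k = l
  · subst h; exact qc_of_commute rfl
  · exact qc_of_commute (P.xx_comm k l h)

lemma qc_yy (P : TensorCyclicPres F A i n) (k l : Fin n) : qc i (P.y k) (P.y l) := by
  by_cases h : k = l
  · subst h; exact qc_of_commute rfl
  · exact qc_of_commute (P.yy_comm k l h)

lemma qc_block (hi : i ^ 2 = -1) (P : TensorCyclicPres F A i n) (k l : Fin n) (a b c d : ℕ) :
    qc i (P.x k ^ a * P.y k ^ b) (P.x l ^ c * P.y l ^ d) := by
  have q1 : qc i (P.x k) (P.x l ^ c * P.y l ^ d) :=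
    ((qc_xx P k l).pow_right c).mul_right ((qc_xy P k l).pow_right d)
  have q2 : qc i (P.y k) (P.x l ^ c * P.y l ^ d) :=
    ((qc_yx hi P k l).pow_right c).mul_right ((qc_yy P k l).pow_right d)
  exact (q1.pow_left a).mul_left (q2.pow_left b)

lemma qc_mono (hi : i ^ 2 = -1) (P : TensorCyclicPres F A i n) {u v : A}
    (hu : P.IsMonomial u) (hv : P.IsMonomial v) : qc i u v := by
  obtain ⟨a, b, rfl⟩ := hu
  obtain ⟨c, d, rfl⟩ := hv
  apply qc_list_left
  intro x hx
  simp only [List.mem_map] at hx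
  obtain ⟨k, -, rfl⟩ := hx
  apply qc_list_right
  intro z hz
  simp only [List.mem_map] at hz
  obtain ⟨l, -, rfl⟩ := hz
  exact qc_block hi P k l _ _ _ _

lemma x_y_pow (P : TensorCyclicPres F A i n) (k : Fin n) (b : ℕ) :
    P.x k * P.y k ^ b = i ^ b • (P.y k ^ b * P.x k) := by
  induction b with
  | zero => simp
  | succ m ih =>
    rw [pow_succ', ← mul_assoc, P.xy_rel k, smul_mul_assoc, mul_assoc, ih, mul_smul_comm,
      smul_smul, ← mul_assoc, ← pow_succ', ← pow_succ']

lemma y_x_pow (hi : i ^ 2 = -1) (P : TensorCyclicPres F A i n) (k : Fin n) (a : ℕ) :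
    P.y k * P.x k ^ a = i ^ (3 * a) • (P.x k ^ a * P.y k) := by
  have h1 : P.x k * P.y k = i ^ 1 • (P.y k * P.x k) := by rw [pow_one]; exact P.xy_rel k
  have yx : P.y k * P.x k = i ^ 3 • (P.x k * P.y k) := by
    simpa using flip_pow hi (by norm_num) h1
  induction a with
  | zero => simp
  | succ m ih =>
    rw [pow_succ', ← mul_assoc, yx, smul_mul_assoc, mul_assoc, ih, mul_smul_comm,
      smul_smul, ← mul_assoc, ← pow_succ', ← pow_add]
    congr 2
    ring

lemma conj_x (hi : i ^ 2 = -1) (P : TensorCyclicPres F A i n) (l k : Fin n) (a b : ℕ) :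
    P.x l * (P.x k ^ a * P.y k ^ b) =
      i ^ (if k = l then b else 0) • ((P.x k ^ a * P.y k ^ b) * P.x l) := by
  by_cases h : k = l
  · subst h
    simp only [eq_self_iff_true, if_true]
    rw [← mul_assoc, ((Commute.refl (P.x k)).pow_right a).eq, mul_assoc, x_y_pow P k b,
      mul_smul_comm, mul_assoc]
  · simp only [if_neg h]
    have hc : Commute (P.x l) (P.x k ^ a * P.y k ^ b) :=
      ((P.xx_comm l k (Ne.symm h)).pow_right a).mul_right ((P.xy_comm l k (Ne.symm h)).pow_right b)
    rw [pow_zero, one_smul, hc.eq]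

lemma conj_y (hi : i ^ 2 = -1) (P : TensorCyclicPres F A i n) (l k : Fin n) (a b : ℕ) :
    P.y l * (P.x k ^ a * P.y k ^ b) =
      i ^ (if k = l then 3 * a else 0) • ((P.x k ^ a * P.y k ^ b) * P.y l) := by
  by_cases h : k = l
  · subst h
    simp only [eq_self_iff_true, if_true]
    rw [← mul_assoc, y_x_pow hi P k a, smul_mul_assoc, mul_assoc, ← pow_succ', pow_succ,
      ← mul_assoc]
  · simp only [if_neg h]
    have hc : Commute (P.y l) (P.x k ^ a * P.y k ^ b) :=
      ((P.xy_comm k l h).symm.pow_right a).mul_right ((P.yy_comm l k (Ne.symm h)).pow_right b)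
    rw [pow_zero, one_smul, hc.eq]

lemma conj_list {g : A} {L : List (Fin n)} {f : Fin n → A} {e : Fin n → ℕ}
    (h : ∀ k ∈ L, g * f k = i ^ (e k) • (f k * g)) :
    g * (L.map f).prod = i ^ ((L.map e).sum) • ((L.map f).prod * g) := by
  induction L with
  | nil => simp
  | cons a L ih =>
    simp only [List.map_cons, List.prod_cons, List.sum_cons]
    rw [qc_mul (h a (by simp)) (ih fun k hk => h k (by simp [hk])), ← pow_add]

lemma sum_if_list {l : Fin n} {L : List (Fin n)} (hnd : L.Nodup) (hl : l ∈ L) (c : Fin n → ℕ) :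
    (L.map (fun k => if k = l then c k else 0)).sum = c l := by
  induction L with
  | nil => simp at hl
  | cons a L ih =>
    simp only [List.map_cons, List.sum_cons]
    rcases List.nodup_cons.mp hnd with ⟨hna, hndL⟩
    by_cases h : a = l
    · subst h
      simp only [eq_self_iff_true, if_true]
      have : (L.map (fun k => if k = a then c k else 0)).sum = 0 := by
        apply List.sum_eq_zero
        intro x hx
        simp only [List.mem_map] at hx
        obtain ⟨k, hk, rfl⟩ := hx
        have : k ≠ a := fun hka => hna (hka ▸ hk)
        simp [this]
      rw [this]
      omega
    · simp only [if_neg h]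
      have hl' : l ∈ L := by
        rcases List.mem_cons.mp hl with h' | h'
        · exact absurd h'.symm h
        · exact h'
      rw [ih hndL hl', zero_add]

lemma conj_mono_x (hi : i ^ 2 = -1) (P : TensorCyclicPres F A i n) {v : A}
    {a b : Fin n → Fin 4}
    (hv : v = ((List.finRange n).map (fun k => P.x k ^ (a k : ℕ) * P.y k ^ (b k : ℕ))).prod)
    (l : Fin n) : P.x l * v = i ^ ((b l : ℕ)) • (v * P.x l) := by
  subst hv
  have := conj_list (g := P.x l) (L := List.finRange n)
    (f := fun k => P.x k ^ (a k : ℕ) * P.y k ^ (b k : ℕ))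
    (e := fun k => if k = l then (b k : ℕ) else 0)
    (fun k _ => conj_x hi P l k _ _)
  rwa [sum_if_list (List.nodup_finRange n) (List.mem_finRange l)] at this

lemma conj_mono_y (hi : i ^ 2 = -1) (P : TensorCyclicPres F A i n) {v : A}
    {a b : Fin n → Fin 4}
    (hv : v = ((List.finRange n).map (fun k => P.x k ^ (a k : ℕ) * P.y k ^ (b k : ℕ))).prod)
    (l : Fin n) : P.y l * v = i ^ (3 * (a l : ℕ)) • (v * P.y l) := by
  subst hv
  have := conj_list (g := P.y l) (L := List.finRange n)
    (f := fun k => P.x k ^ (a k : ℕ) * P.y k ^ (b k : ℕ))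
    (e := fun k => if k = l then 3 * (a k : ℕ) else 0)
    (fun k _ => conj_y hi P l k _ _)
  rwa [sum_if_list (List.nodup_finRange n) (List.mem_finRange l)
    (fun k => 3 * (a k : ℕ))] at this

lemma mono_smul_eq (hi : i ^ 2 = -1) (P : TensorCyclicPres F A i n) {u v : A}
    (hu : P.IsMonomial u) (hv : P.IsMonomial v) {lam : F} (hlam : u = lam • v) : u = v := by
  obtain ⟨a, b, ha⟩ := hu
  obtain ⟨a', b', ha'⟩ := hv
  have hune : u ≠ 0 := mono_ne_zero P ⟨a, b, ha⟩
  have hbb : b = b' := by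
    funext l
    have e1 : P.x l * u = i ^ ((b l : ℕ)) • (u * P.x l) := conj_mono_x hi P ha l
    have e2 : P.x l * u = i ^ ((b' l : ℕ)) • (u * P.x l) := by
      rw [hlam, mul_smul_comm, conj_mono_x hi P ha' l, smul_comm, ← smul_mul_assoc]
    have := ipow_inj hi _ _ (smul_cancel (mul_ne_zero hune (x_ne_zero P l)) (e1.symm.trans e2))
    rw [Nat.mod_eq_of_lt (b l).isLt, Nat.mod_eq_of_lt (b' l).isLt] at this
    exact Fin.ext this
  have haa : a = a' := by
    funext l
    have e1 : P.y l * u = i ^ (3 * (a l : ℕ)) • (u * P.y l) := conj_mono_y hi P ha l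
    have e2 : P.y l * u = i ^ (3 * (a' l : ℕ)) • (u * P.y l) := by
      rw [hlam, mul_smul_comm, conj_mono_y hi P ha' l, smul_comm, ← smul_mul_assoc]
    have h3 := ipow_inj hi _ _ (smul_cancel (mul_ne_zero hune (y_ne_zero P l)) (e1.symm.trans e2))
    have h4 : (a l : ℕ) < 4 := (a l).isLt
    have h5 : (a' l : ℕ) < 4 := (a' l).isLt
    exact Fin.ext (by omega)
  rw [ha, ha', haa, hbb]

end Mono
section Extract
variable {F A : Type*} [Field F] [CharZero F] [DivisionRing A] [Algebra F A]
variable {i : F}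

theorem triple_exp (u v z : A) (w1 w2 w3 : F)
    (hvu : v * u = w1 • (u * v)) (hzu : z * u = w2 • (u * z)) (hzv : z * v = w3 • (v * z))
    (s t : F) :
    (u + s • v + t • z) ^ 4 =
      ((1)) • (u * (u * (u * u))) +
      (s*(1 + w1 + w1^2 + w1^3)) • (u * (u * (u * v))) +
      (t*(1 + w2 + w2^2 + w2^3)) • (u * (u * (u * z))) +
      (s^2*(1 + w1 + 2*w1^2 + w1^3 + w1^4)) • (u * (u * (v * v))) +
      (s*t*(1 + w3 + w2*w3 + w2^2*w3 + w1 + w1*w2 + w1*w2*w3 + w1*w2^2*w3 + w1^2 + w1^2*w2 + w1^2*w2^2 + w1^2*w2^2*w3)) • (u * (u * (v * z))) +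
      (t^2*(1 + w2 + 2*w2^2 + w2^3 + w2^4)) • (u * (u * (z * z))) +
      (s^3*(1 + w1 + w1^2 + w1^3)) • (u * (v * (v * v))) +
      (s^2*t*(1 + w3 + w3^2 + w2*w3^2 + w1 + w1*w3 + w1*w2*w3 + w1*w2*w3^2 + w1^2 + w1^2*w2 + w1^2*w2*w3 + w1^2*w2*w3^2)) • (u * (v * (v * z))) +
      (s*t^2*(1 + w3 + w3^2 + w2*w3 + w2*w3^2 + w2^2*w3^2 + w1 + w1*w2 + w1*w2*w3 + w1*w2^2 + w1*w2^2*w3 + w1*w2^2*w3^2)) • (u * (v * (z * z))) +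
      (t^3*(1 + w2 + w2^2 + w2^3)) • (u * (z * (z * z))) +
      (s^4*(1)) • (v * (v * (v * v))) +
      (s^3*t*(1 + w3 + w3^2 + w3^3)) • (v * (v * (v * z))) +
      (s^2*t^2*(1 + w3 + 2*w3^2 + w3^3 + w3^4)) • (v * (v * (z * z))) +
      (s*t^3*(1 + w3 + w3^2 + w3^3)) • (v * (z * (z * z))) +
      (t^4*(1)) • (z * (z * (z * z)))

    := by
  have hvu' : ∀ c : A, v * (u * c) = w1 • (u * (v * c)) := fun c => by
    rw [← mul_assoc, hvu, smul_mul_assoc, mul_assoc]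
  have hzu' : ∀ c : A, z * (u * c) = w2 • (u * (z * c)) := fun c => by
    rw [← mul_assoc, hzu, smul_mul_assoc, mul_assoc]
  have hzv' : ∀ c : A, z * (v * c) = w3 • (v * (z * c)) := fun c => by
    rw [← mul_assoc, hzv, smul_mul_assoc, mul_assoc]
  simp only [pow_succ, pow_zero, one_mul, mul_add, add_mul, smul_mul_assoc, mul_smul_comm,
    smul_smul, mul_assoc, hvu, hzu, hzv, hvu', hzu', hzv']
  match_scalars <;> ring

def gammaPoly (w1 w2 w3 : F) : F :=
  1 + w3 + w2*w3 + w2^2*w3 + w1 + w1*w2 + w1*w2*w3 + w1*w2^2*w3 + w1^2 + w1^2*w2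
    + w1^2*w2^2 + w1^2*w2^2*w3

theorem extract_triple {R : Submodule F A} (u v z : A) (w1 w2 w3 : F)
    (hvu : v * u = w1 • (u * v)) (hzu : z * u = w2 • (u * z)) (hzv : z * v = w3 • (v * z))
    (hmem : ∀ s t : F, (u + s • v + t • z) ^ 4 ∈ R)
    (hg : (144 : F) * gammaPoly w1 w2 w3 ≠ 0) :
    u * (u * (v * z)) ∈ R := by
  have key : (64:F) • (u + (1:F) • v + (1:F) • z) ^ 4 +
      (-64:F) • (u + (1:F) • v + (-1:F) • z) ^ 4 +
      (-8:F) • (u + (1:F) • v + (2:F) • z) ^ 4 +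
      (8:F) • (u + (1:F) • v + (-2:F) • z) ^ 4 +
      (-64:F) • (u + (-1:F) • v + (1:F) • z) ^ 4 +
      (64:F) • (u + (-1:F) • v + (-1:F) • z) ^ 4 +
      (8:F) • (u + (-1:F) • v + (2:F) • z) ^ 4 +
      (-8:F) • (u + (-1:F) • v + (-2:F) • z) ^ 4 +
      (-8:F) • (u + (2:F) • v + (1:F) • z) ^ 4 +
      (8:F) • (u + (2:F) • v + (-1:F) • z) ^ 4 +
      (1:F) • (u + (2:F) • v + (2:F) • z) ^ 4 +
      (-1:F) • (u + (2:F) • v + (-2:F) • z) ^ 4 +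
      (8:F) • (u + (-2:F) • v + (1:F) • z) ^ 4 +
      (-8:F) • (u + (-2:F) • v + (-1:F) • z) ^ 4 +
      (-1:F) • (u + (-2:F) • v + (2:F) • z) ^ 4 +
      (1:F) • (u + (-2:F) • v + (-2:F) • z) ^ 4
      = (144 * gammaPoly w1 w2 w3) • (u * (u * (v * z))) := by
    rw [triple_exp u v z w1 w2 w3 hvu hzu hzv (1:F) (1:F),
    triple_exp u v z w1 w2 w3 hvu hzu hzv (1:F) (-1:F),
    triple_exp u v z w1 w2 w3 hvu hzu hzv (1:F) (2:F),
    triple_exp u v z w1 w2 w3 hvu hzu hzv (1:F) (-2:F),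
    triple_exp u v z w1 w2 w3 hvu hzu hzv (-1:F) (1:F),
    triple_exp u v z w1 w2 w3 hvu hzu hzv (-1:F) (-1:F),
    triple_exp u v z w1 w2 w3 hvu hzu hzv (-1:F) (2:F),
    triple_exp u v z w1 w2 w3 hvu hzu hzv (-1:F) (-2:F),
    triple_exp u v z w1 w2 w3 hvu hzu hzv (2:F) (1:F),
    triple_exp u v z w1 w2 w3 hvu hzu hzv (2:F) (-1:F),
    triple_exp u v z w1 w2 w3 hvu hzu hzv (2:F) (2:F),
    triple_exp u v z w1 w2 w3 hvu hzu hzv (2:F) (-2:F),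
    triple_exp u v z w1 w2 w3 hvu hzu hzv (-2:F) (1:F),
    triple_exp u v z w1 w2 w3 hvu hzu hzv (-2:F) (-1:F),
    triple_exp u v z w1 w2 w3 hvu hzu hzv (-2:F) (2:F),
    triple_exp u v z w1 w2 w3 hvu hzu hzv (-2:F) (-2:F)]
    simp only [gammaPoly]
    match_scalars <;> ring
  have hsum : (64:F) • (u + (1:F) • v + (1:F) • z) ^ 4 +
      (-64:F) • (u + (1:F) • v + (-1:F) • z) ^ 4 +
      (-8:F) • (u + (1:F) • v + (2:F) • z) ^ 4 +
      (8:F) • (u + (1:F) • v + (-2:F) • z) ^ 4 +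
      (-64:F) • (u + (-1:F) • v + (1:F) • z) ^ 4 +
      (64:F) • (u + (-1:F) • v + (-1:F) • z) ^ 4 +
      (8:F) • (u + (-1:F) • v + (2:F) • z) ^ 4 +
      (-8:F) • (u + (-1:F) • v + (-2:F) • z) ^ 4 +
      (-8:F) • (u + (2:F) • v + (1:F) • z) ^ 4 +
      (8:F) • (u + (2:F) • v + (-1:F) • z) ^ 4 +
      (1:F) • (u + (2:F) • v + (2:F) • z) ^ 4 +
      (-1:F) • (u + (2:F) • v + (-2:F) • z) ^ 4 +
      (8:F) • (u + (-2:F) • v + (1:F) • z) ^ 4 +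
      (-8:F) • (u + (-2:F) • v + (-1:F) • z) ^ 4 +
      (-1:F) • (u + (-2:F) • v + (2:F) • z) ^ 4 +
      (1:F) • (u + (-2:F) • v + (-2:F) • z) ^ 4 ∈ R := by
    repeat first
      | apply Submodule.add_mem
      | apply Submodule.smul_mem
      | exact hmem _ _
  rw [key] at hsum
  exact (Submodule.smul_mem_iff R hg).mp hsum


theorem pair_exp0 {F A : Type*} [Field F] [DivisionRing A] [Algebra F A]
    (u v : A) (hvu : v * u = u * v) (s : F) :
    (u + s • v) ^ 4 =
      (u * (u * (u * u))) + (4*s) • (u * (u * (u * v))) + (6*s^2) • (u * (u * (v * v)))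
        + (4*s^3) • (u * (v * (v * v))) + (s^4) • (v * (v * (v * v))) := by
  have hvu' : ∀ c : A, v * (u * c) = u * (v * c) := fun c => by
    rw [← mul_assoc, hvu, mul_assoc]
  simp only [pow_succ, pow_zero, one_mul, mul_add, add_mul, smul_mul_assoc, mul_smul_comm,
    smul_smul, mul_assoc, hvu, hvu']
  match_scalars <;> ring

theorem pair_exp2 {F A : Type*} [Field F] [DivisionRing A] [Algebra F A]
    (u v : A) (hvu : v * u = -(u * v)) (s : F) :
    (u + s • v) ^ 4 =
      (u * (u * (u * u))) + (2*s^2) • (u * (u * (v * v))) + (s^4) • (v * (v * (v * v))) := by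
  have hvu' : ∀ c : A, v * (u * c) = -(u * (v * c)) := fun c => by
    rw [← mul_assoc, hvu, neg_mul, mul_assoc]
  simp only [pow_succ, pow_zero, one_mul, mul_add, add_mul, smul_mul_assoc, mul_smul_comm,
    smul_smul, mul_assoc, hvu, hvu', mul_neg, neg_mul, smul_neg, neg_neg, neg_add]
  match_scalars <;> ring

theorem extract_pair0 {F A : Type*} [Field F] [CharZero F] [DivisionRing A] [Algebra F A]
    {R : Submodule F A} (u v : A) (hvu : v * u = u * v)
    (hmem : ∀ s : F, (u + s • v) ^ 4 ∈ R) :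
    u * (u * (u * v)) ∈ R := by
  have key : (8:F) • (u + (1:F) • v) ^ 4 + (-8:F) • (u + (-1:F) • v) ^ 4
      + (-1:F) • (u + (2:F) • v) ^ 4 + (1:F) • (u + (-2:F) • v) ^ 4
      = (48 : F) • (u * (u * (u * v))) := by
    rw [pair_exp0 u v hvu 1, pair_exp0 u v hvu (-1), pair_exp0 u v hvu 2, pair_exp0 u v hvu (-2)]
    match_scalars <;> ring
  have hsum : (8:F) • (u + (1:F) • v) ^ 4 + (-8:F) • (u + (-1:F) • v) ^ 4
      + (-1:F) • (u + (2:F) • v) ^ 4 + (1:F) • (u + (-2:F) • v) ^ 4 ∈ R := by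
    repeat first
      | apply Submodule.add_mem
      | apply Submodule.smul_mem
      | exact hmem _
  rw [key] at hsum
  exact (Submodule.smul_mem_iff R (by norm_num : (48:F) ≠ 0)).mp hsum

theorem extract_pair2 {F A : Type*} [Field F] [CharZero F] [DivisionRing A] [Algebra F A]
    {R : Submodule F A} (u v : A) (hvu : v * u = -(u * v))
    (hmem : ∀ s : F, (u + s • v) ^ 4 ∈ R) :
    u * (u * (v * v)) ∈ R := by
  have key : (16:F) • (u + (1:F) • v) ^ 4 + (16:F) • (u + (-1:F) • v) ^ 4
      + (-1:F) • (u + (2:F) • v) ^ 4 + (-1:F) • (u + (-2:F) • v) ^ 4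
      + (-30:F) • (u + (0:F) • v) ^ 4
      = (48 : F) • (u * (u * (v * v))) := by
    rw [pair_exp2 u v hvu 1, pair_exp2 u v hvu (-1), pair_exp2 u v hvu 2, pair_exp2 u v hvu (-2),
      pair_exp2 u v hvu 0]
    match_scalars <;> ring
  have hsum : (16:F) • (u + (1:F) • v) ^ 4 + (16:F) • (u + (-1:F) • v) ^ 4
      + (-1:F) • (u + (2:F) • v) ^ 4 + (-1:F) • (u + (-2:F) • v) ^ 4
      + (-30:F) • (u + (0:F) • v) ^ 4 ∈ R := by
    repeat first
      | apply Submodule.add_mem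
      | apply Submodule.smul_mem
      | exact hmem _
  rw [key] at hsum
  exact (Submodule.smul_mem_iff R (by norm_num : (48:F) ≠ 0)).mp hsum

theorem central_conflict {F A : Type*} [Field F] [CharZero F] [DivisionRing A] [Algebra F A]
    {i : F} (hi : i ^ 2 = -1) {W t : A} {μ : F} (hW : W = algebraMap F A μ)
    (hWne : W ≠ 0) (ht : t ≠ 0) {e : ℕ} (hmove : t * W = i ^ e • (W * t)) : e % 4 = 0 := by
  have hc : t * W = W * t := by rw [hW]; exact (Algebra.commutes μ t).symm
  rw [hc] at hmove
  have h1 : (1:F) • (W * t) = i ^ e • (W * t) := by rw [one_smul]; exact hmove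
  exact ipow_eq_one hi e (smul_cancel (mul_ne_zero hWne ht) h1).symm

end Extract

section ZeroCase
variable {F A : Type*} [Field F] [CharZero F] [DivisionRing A] [Algebra F A]
variable {i : F} {n : ℕ}

theorem zero_case (hi : i ^ 2 = -1) (P : TensorCyclicPres F A i n) {vk w : A}
    (hvk : P.IsMonomial vk) (hw : P.IsMonomial w)
    (hcomm : vk * w = w * vk)
    (hmem : ∀ s : F, (w + s • vk) ^ 4 ∈ LinearMap.range (Algebra.linearMap F A))
    (hw4 : w ^ 4 ∈ LinearMap.range (Algebra.linearMap F A)) : vk = w := by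
  have hwne : w ≠ 0 := mono_ne_zero P hw
  obtain ⟨μ, hμ⟩ := extract_pair0 w vk hcomm hmem
  obtain ⟨ν, hν⟩ := hw4
  simp only [Algebra.linearMap_apply] at hμ hν
  have hν0 : ν ≠ 0 := by
    intro h; rw [h, map_zero] at hν; exact pow_ne_zero 4 hwne hν.symm
  have e1 : w ^ 4 * vk = algebraMap F A μ * w := by
    have h2 : w * (w * (w * (w * vk))) = w * algebraMap F A μ := by rw [← hμ]
    rw [← Algebra.commutes μ w] at h2
    rw [← h2]
    noncomm_ring
  rw [← hν] at e1
  have hsm : ν • vk = μ • w := by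
    rw [Algebra.smul_def, Algebra.smul_def]; exact e1
  have hlam : vk = (ν⁻¹ * μ) • w := by
    have := congrArg (fun x => ν⁻¹ • x) hsm
    simpa [smul_smul, inv_mul_cancel₀ hν0] using this
  exact mono_smul_eq hi P hvk hw hlam

end ZeroCase

/-- If five distinct monomials `v₁, v₂, v₃, v₄, w` span a Kummer space and
`v₁, v₂, v₄, v₃` form a directed 4-cycle (`v₁v₂ = i·v₂v₁`, `v₂v₄ = i·v₄v₂`,
`v₄v₃ = i·v₃v₄`, `v₃v₁ = i·v₁v₃`) with anti-commuting diagonals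
(`v₁v₄ = -v₄v₁`, `v₂v₃ = -v₃v₂`), then either `w vₖ = i·vₖ w` for all `k`, or
`vₖ w = i·w vₖ` for all `k`. -/
theorem statement9 {F A : Type*} [Field F] [CharZero F] [DivisionRing A] [Algebra F A]
    (i : F) (hi : i ^ 2 = -1) (n : ℕ) (hn : 1 ≤ n)
    (P : TensorCyclicPres F A i n) (hdim : Module.finrank F A = 16 ^ n)
    (v₁ v₂ v₃ v₄ w : A)
    (h₁ : P.IsMonomial v₁) (h₂ : P.IsMonomial v₂) (h₃ : P.IsMonomial v₃)
    (h₄ : P.IsMonomial v₄) (hw : P.IsMonomial w)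
    (hdist : List.Pairwise (· ≠ ·) [v₁, v₂, v₃, v₄, w])
    (hK : ∀ u ∈ Submodule.span F ({v₁, v₂, v₃, v₄, w} : Set A),
      u ^ 4 ∈ Set.range (algebraMap F A))
    (h12 : v₁ * v₂ = i • (v₂ * v₁)) (h24 : v₂ * v₄ = i • (v₄ * v₂))
    (h43 : v₄ * v₃ = i • (v₃ * v₄)) (h31 : v₃ * v₁ = i • (v₁ * v₃))
    (h14 : v₁ * v₄ = -(v₄ * v₁)) (h23 : v₂ * v₃ = -(v₃ * v₂)) :
    (w * v₁ = i • (v₁ * w) ∧ w * v₂ = i • (v₂ * w) ∧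
      w * v₃ = i • (v₃ * w) ∧ w * v₄ = i • (v₄ * w)) ∨
    (v₁ * w = i • (w * v₁) ∧ v₂ * w = i • (w * v₂) ∧
      v₃ * w = i • (w * v₃) ∧ v₄ * w = i • (w * v₄)) := by
  classical
  -- distinctness facts
  have hd1w : v₁ ≠ w := List.rel_of_pairwise_cons hdist (by simp)
  have hd2w : v₂ ≠ w := List.rel_of_pairwise_cons hdist.of_cons (by simp)
  have hd3w : v₃ ≠ w := List.rel_of_pairwise_cons hdist.of_cons.of_cons (by simp)
  have hd4w : v₄ ≠ w := List.rel_of_pairwise_cons hdist.of_cons.of_cons.of_cons (by simp)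
  -- the scalar submodule
  set R : Submodule F A := LinearMap.range (Algebra.linearMap F A) with hRdef
  set SP : Submodule F A := Submodule.span F ({v₁, v₂, v₃, v₄, w} : Set A) with hSPdef
  have hmemR : ∀ u ∈ SP, u ^ 4 ∈ R := by
    intro u hu
    obtain ⟨μ, hμ⟩ := hK u hu
    exact ⟨μ, by simpa [Algebra.linearMap_apply] using hμ⟩
  have sp1 : v₁ ∈ SP := Submodule.subset_span (by simp)
  have sp2 : v₂ ∈ SP := Submodule.subset_span (by simp)
  have sp3 : v₃ ∈ SP := Submodule.subset_span (by simp)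
  have sp4 : v₄ ∈ SP := Submodule.subset_span (by simp)
  have sp5 : w ∈ SP := Submodule.subset_span (by simp)
  have mem3 : ∀ a b c : A, a ∈ SP → b ∈ SP → c ∈ SP →
      ∀ s t : F, (a + s • b + t • c) ^ 4 ∈ R := fun a b c ha hb hc s t =>
    hmemR _ (add_mem (add_mem ha (Submodule.smul_mem _ _ hb)) (Submodule.smul_mem _ _ hc))
  have mem2 : ∀ a b : A, a ∈ SP → b ∈ SP → ∀ s : F, (a + s • b) ^ 4 ∈ R := fun a b ha hb s =>
    hmemR _ (add_mem ha (Submodule.smul_mem _ _ hb))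
  -- nonzero
  have hn1 : v₁ ≠ 0 := mono_ne_zero P h₁
  have hn2 : v₂ ≠ 0 := mono_ne_zero P h₂
  have hn3 : v₃ ≠ 0 := mono_ne_zero P h₃
  have hn4 : v₄ ≠ 0 := mono_ne_zero P h₄
  have hnw : w ≠ 0 := mono_ne_zero P hw
  -- flips
  have h21 : v₂ * v₁ = i ^ 3 • (v₁ * v₂) := by
    have h' : v₁ * v₂ = i ^ 1 • (v₂ * v₁) := by rw [pow_one]; exact h12
    simpa using flip_pow hi (by norm_num) h'
  have h42 : v₄ * v₂ = i ^ 3 • (v₂ * v₄) := by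
    have h' : v₂ * v₄ = i ^ 1 • (v₄ * v₂) := by rw [pow_one]; exact h24
    simpa using flip_pow hi (by norm_num) h'
  have h34 : v₃ * v₄ = i ^ 3 • (v₄ * v₃) := by
    have h' : v₄ * v₃ = i ^ 1 • (v₃ * v₄) := by rw [pow_one]; exact h43
    simpa using flip_pow hi (by norm_num) h'
  have h13 : v₁ * v₃ = i ^ 3 • (v₃ * v₁) := by
    have h' : v₃ * v₁ = i ^ 1 • (v₁ * v₃) := by rw [pow_one]; exact h31
    simpa using flip_pow hi (by norm_num) h'
  have h41 : v₄ * v₁ = -(v₁ * v₄) := by rw [h14, neg_neg]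
  have h32 : v₃ * v₂ = -(v₂ * v₃) := by rw [h23, neg_neg]
  have h41i : v₄ * v₁ = i ^ 2 • (v₁ * v₄) := neg_to_i2 hi h41
  have h32i : v₃ * v₂ = i ^ 2 • (v₂ * v₃) := neg_to_i2 hi h32
  have h23i : v₂ * v₃ = i ^ 2 • (v₃ * v₂) := neg_to_i2 hi h23
  -- commutation exponents of w
  obtain ⟨m₁, hq₁⟩ := qc_mono hi P hw h₁
  obtain ⟨c₁, hc₁lt, hm₁⟩ : ∃ c, c < 4 ∧ w * v₁ = i ^ c • (v₁ * w) :=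
    ⟨m₁ % 4, Nat.mod_lt _ (by norm_num), by rw [hq₁, ipow_mod hi m₁]⟩
  obtain ⟨m₂, hq₂⟩ := qc_mono hi P hw h₂
  obtain ⟨c₂, hc₂lt, hm₂⟩ : ∃ c, c < 4 ∧ w * v₂ = i ^ c • (v₂ * w) :=
    ⟨m₂ % 4, Nat.mod_lt _ (by norm_num), by rw [hq₂, ipow_mod hi m₂]⟩
  obtain ⟨m₃, hq₃⟩ := qc_mono hi P hw h₃
  obtain ⟨c₃, hc₃lt, hm₃⟩ : ∃ c, c < 4 ∧ w * v₃ = i ^ c • (v₃ * w) :=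
    ⟨m₃ % 4, Nat.mod_lt _ (by norm_num), by rw [hq₃, ipow_mod hi m₃]⟩
  obtain ⟨m₄, hq₄⟩ := qc_mono hi P hw h₄
  obtain ⟨c₄, hc₄lt, hm₄⟩ : ∃ c, c < 4 ∧ w * v₄ = i ^ c • (v₄ * w) :=
    ⟨m₄ % 4, Nat.mod_lt _ (by norm_num), by rw [hq₄, ipow_mod hi m₄]⟩
  -- nonvanishing Gamma values
  have hgA : (144 : F) * gammaPoly (i ^ 3) i (i ^ 2) ≠ 0 := by
    have hv : gammaPoly (i ^ 3) i (i ^ 2) = -(4 * i) := by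
      simp only [gammaPoly]
      linear_combination (1 + 4*i - 2*i^3 + 2*i^4 + 2*i^5 + i^8) * hi
    rw [hv]
    exact mul_ne_zero (by norm_num) (by simp [i_ne_zero hi])
  have hgB : (144 : F) * gammaPoly i (i ^ 3) (i ^ 2) ≠ 0 := by
    have hv : gammaPoly i (i ^ 3) (i ^ 2) = 4 * i := by
      simp only [gammaPoly]
      linear_combination (1 - 3*i + i^2 + 3*i^3 - i^5 + i^6 + i^7 + i^8) * hi
    rw [hv]
    exact mul_ne_zero (by norm_num) (by simp [i_ne_zero hi])
  have hgC : (144 : F) * gammaPoly (i ^ 3) i (i ^ 3) ≠ 0 := by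
    have hv : gammaPoly (i ^ 3) i (i ^ 3) = 4 - 4 * i := by
      simp only [gammaPoly]
      linear_combination (-3 + 4*i + 3*i^2 - 2*i^3 - i^4 + 3*i^5 + 2*i^6 - i^7 + i^9) * hi
    rw [hv]
    refine mul_ne_zero (by norm_num) fun h => ?_
    have hii : i = 1 := by linear_combination (-(1:F)/4) * h
    rw [hii] at hi; norm_num at hi
  have hgD : (144 : F) * gammaPoly i (i ^ 3) i ≠ 0 := by
    have hv : gammaPoly i (i ^ 3) i = 4 + 4 * i := by
      simp only [gammaPoly]
      linear_combination (-3 - 2*i + 4*i^2 + 2*i^3 - 2*i^4 + 2*i^6 + i^7) * hi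
    rw [hv]
    refine mul_ne_zero (by norm_num) fun h => ?_
    have hii : i = -1 := by linear_combination ((1:F)/4) * h
    rw [hii] at hi; norm_num at hi
  -- unconditional congruences
  have G1 : (c₁ + (c₁ + (c₂ + c₃))) % 4 = 0 := by
    obtain ⟨μ, hμ⟩ := extract_triple v₁ v₂ v₃ (i ^ 3) i (i ^ 2) h21 h31 h32i
      (mem3 _ _ _ sp1 sp2 sp3) hgA
    refine central_conflict hi (by simpa [Algebra.linearMap_apply] using hμ.symm)
      (mul_ne_zero hn1 (mul_ne_zero hn1 (mul_ne_zero hn2 hn3))) hnw ?_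
    rw [qc_mul hm₁ (qc_mul hm₁ (qc_mul hm₂ hm₃))]
    congr 1
    rw [pow_add, pow_add, pow_add]
  have G2 : (c₂ + (c₂ + (c₁ + c₄))) % 4 = 0 := by
    obtain ⟨μ, hμ⟩ := extract_triple v₂ v₁ v₄ i (i ^ 3) (i ^ 2) h12 h42 h41i
      (mem3 _ _ _ sp2 sp1 sp4) hgB
    refine central_conflict hi (by simpa [Algebra.linearMap_apply] using hμ.symm)
      (mul_ne_zero hn2 (mul_ne_zero hn2 (mul_ne_zero hn1 hn4))) hnw ?_
    rw [qc_mul hm₂ (qc_mul hm₂ (qc_mul hm₁ hm₄))]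
    congr 1
    rw [pow_add, pow_add, pow_add]
  have G3 : (c₃ + (c₃ + (c₁ + c₄))) % 4 = 0 := by
    obtain ⟨μ, hμ⟩ := extract_triple v₃ v₁ v₄ (i ^ 3) i (i ^ 2) h13 h43 h41i
      (mem3 _ _ _ sp3 sp1 sp4) hgA
    refine central_conflict hi (by simpa [Algebra.linearMap_apply] using hμ.symm)
      (mul_ne_zero hn3 (mul_ne_zero hn3 (mul_ne_zero hn1 hn4))) hnw ?_
    rw [qc_mul hm₃ (qc_mul hm₃ (qc_mul hm₁ hm₄))]
    congr 1
    rw [pow_add, pow_add, pow_add]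
  have G4 : (c₄ + (c₄ + (c₂ + c₃))) % 4 = 0 := by
    obtain ⟨μ, hμ⟩ := extract_triple v₄ v₂ v₃ i (i ^ 3) (i ^ 2) h24 h34 h32i
      (mem3 _ _ _ sp4 sp2 sp3) hgB
    refine central_conflict hi (by simpa [Algebra.linearMap_apply] using hμ.symm)
      (mul_ne_zero hn4 (mul_ne_zero hn4 (mul_ne_zero hn2 hn3))) hnw ?_
    rw [qc_mul hm₄ (qc_mul hm₄ (qc_mul hm₂ hm₃))]
    congr 1
    rw [pow_add, pow_add, pow_add]
  have G5 : (c₁ + (c₁ + (c₄ + c₄))) % 4 = 0 := by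
    obtain ⟨μ, hμ⟩ := extract_pair2 v₁ v₄ h41 (mem2 _ _ sp1 sp4)
    refine central_conflict hi (by simpa [Algebra.linearMap_apply] using hμ.symm)
      (mul_ne_zero hn1 (mul_ne_zero hn1 (mul_ne_zero hn4 hn4))) hnw ?_
    rw [qc_mul hm₁ (qc_mul hm₁ (qc_mul hm₄ hm₄))]
    congr 1
    rw [pow_add, pow_add, pow_add]
  have G6 : (c₂ + (c₂ + (c₃ + c₃))) % 4 = 0 := by
    obtain ⟨μ, hμ⟩ := extract_pair2 v₂ v₃ h32 (mem2 _ _ sp2 sp3)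
    refine central_conflict hi (by simpa [Algebra.linearMap_apply] using hμ.symm)
      (mul_ne_zero hn2 (mul_ne_zero hn2 (mul_ne_zero hn3 hn3))) hnw ?_
    rw [qc_mul hm₂ (qc_mul hm₂ (qc_mul hm₃ hm₃))]
    congr 1
    rw [pow_add, pow_add, pow_add]
  -- no commuting pair
  have K01 : c₁ ≠ 0 := by
    intro h0
    have hcm : v₁ * w = w * v₁ := by
      rw [hm₁, h0, pow_zero, one_smul]
    exact hd1w (zero_case hi P h₁ hw hcm (mem2 _ _ sp5 sp1) (hmemR w sp5))
  have K02 : c₂ ≠ 0 := by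
    intro h0
    have hcm : v₂ * w = w * v₂ := by
      rw [hm₂, h0, pow_zero, one_smul]
    exact hd2w (zero_case hi P h₂ hw hcm (mem2 _ _ sp5 sp2) (hmemR w sp5))
  have K03 : c₃ ≠ 0 := by
    intro h0
    have hcm : v₃ * w = w * v₃ := by
      rw [hm₃, h0, pow_zero, one_smul]
    exact hd3w (zero_case hi P h₃ hw hcm (mem2 _ _ sp5 sp3) (hmemR w sp5))
  have K04 : c₄ ≠ 0 := by
    intro h0
    have hcm : v₄ * w = w * v₄ := by
      rw [hm₄, h0, pow_zero, one_smul]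
    exact hd4w (zero_case hi P h₄ hw hcm (mem2 _ _ sp5 sp4) (hmemR w sp5))
  -- conditional congruences
  have K2 : c₁ = 2 → (3 + (3 + ((4 - c₂) + (4 - c₂)))) % 4 = 0 := by
    intro h2c
    have hneg : w * v₁ = -(v₁ * w) := by rw [hm₁, h2c, hi, neg_smul, one_smul]
    obtain ⟨μ, hμ⟩ := extract_pair2 v₁ w hneg (mem2 _ _ sp1 sp5)
    have h2w : v₂ * w = i ^ (4 - c₂) • (w * v₂) := flip_pow hi hc₂lt.le hm₂
    refine central_conflict hi (by simpa [Algebra.linearMap_apply] using hμ.symm)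
      (mul_ne_zero hn1 (mul_ne_zero hn1 (mul_ne_zero hnw hnw))) hn2 ?_
    rw [qc_mul h21 (qc_mul h21 (qc_mul h2w h2w))]
    congr 1
    rw [pow_add, pow_add, pow_add]
  have K13 : c₁ = 1 → c₂ = 3 → (1 + (1 + (2 + (4 - c₃)))) % 4 = 0 := by
    intro e1 e2
    have hm₁' : w * v₁ = i • (v₁ * w) := by rw [hm₁, e1, pow_one]
    have hm₂' : w * v₂ = i ^ 3 • (v₂ * w) := by rw [hm₂, e2]
    obtain ⟨μ, hμ⟩ := extract_triple v₁ v₂ w (i ^ 3) i (i ^ 3) h21 hm₁' hm₂'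
      (mem3 _ _ _ sp1 sp2 sp5) hgC
    have h3w : v₃ * w = i ^ (4 - c₃) • (w * v₃) := flip_pow hi hc₃lt.le hm₃
    have h31' : v₃ * v₁ = i ^ 1 • (v₁ * v₃) := by rw [pow_one]; exact h31
    refine central_conflict hi (by simpa [Algebra.linearMap_apply] using hμ.symm)
      (mul_ne_zero hn1 (mul_ne_zero hn1 (mul_ne_zero hn2 hnw))) hn3 ?_
    rw [qc_mul h31' (qc_mul h31' (qc_mul h32i h3w))]
    congr 1
    rw [pow_add, pow_add, pow_add]
  have K31 : c₁ = 3 → c₃ = 1 → (3 + (3 + (2 + (4 - c₂)))) % 4 = 0 := by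
    intro e1 e3
    have hm₁' : w * v₁ = i ^ 3 • (v₁ * w) := by rw [hm₁, e1]
    have hm₃' : w * v₃ = i • (v₃ * w) := by rw [hm₃, e3, pow_one]
    obtain ⟨μ, hμ⟩ := extract_triple v₁ v₃ w i (i ^ 3) i h31 hm₁' hm₃'
      (mem3 _ _ _ sp1 sp3 sp5) hgD
    have h2w : v₂ * w = i ^ (4 - c₂) • (w * v₂) := flip_pow hi hc₂lt.le hm₂
    refine central_conflict hi (by simpa [Algebra.linearMap_apply] using hμ.symm)
      (mul_ne_zero hn1 (mul_ne_zero hn1 (mul_ne_zero hn3 hnw))) hn2 ?_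
    rw [qc_mul h21 (qc_mul h21 (qc_mul h23i h2w))]
    congr 1
    rw [pow_add, pow_add, pow_add]
  -- case analysis
  interval_cases c₁ <;> interval_cases c₂ <;> interval_cases c₃ <;> interval_cases c₄ <;>
    first
      | omega
      | exact absurd (K2 rfl) (by decide)
      | exact absurd (K13 rfl rfl) (by decide)
      | exact absurd (K31 rfl rfl) (by decide)
      | exact Or.inl ⟨by simpa using hm₁, by simpa using hm₂,
          by simpa using hm₃, by simpa using hm₄⟩
      | exact Or.inr ⟨by simpa using flip_pow hi (by norm_num) hm₁,
          by simpa using flip_pow hi (by norm_num) hm₂,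
          by simpa using flip_pow hi (by norm_num) hm₃,
          by simpa using flip_pow hi (by norm_num) hm₄⟩
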